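/- arXiv:1001.0938 — 6 statements merged into one kernel-verified Lean document; each statement's English description precedes it below -/
import Mathlib

section
/- For each l ≥ 1, the function a(λ) := α_l(λ) belongs to the class B₀; that is, a(0) > 0, a is increasing with a(λ) → ∞ as λ → ∞, and λ ↦ λ / a(λ) is increasing on (0,∞). -/
/-- The iterated-logarithm hierarchy: `iterLog α 0 = α`,
`iterLog α (l+1) = log (e + iterLog α l)`. -/
noncomputable def iterLog (α : ℝ → ℝ) : ℕ → ℝ → ℝ
  | 0 => α
  | l + 1 => fun x => Real.log (Real.exp 1 + iterLog α l x)

/-- The class `B₀`: nonnegative functions `a` with `a 0 > 0`, `a` increasing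
to infinity, and `λ ↦ λ / a λ` increasing on `(0,∞)`. -/
def memB0 (a : ℝ → ℝ) : Prop :=
  0 < a 0 ∧ (∀ x : ℝ, 0 ≤ x → 0 ≤ a x) ∧ MonotoneOn a (Set.Ici 0) ∧
    Filter.Tendsto a Filter.atTop Filter.atTop ∧
    MonotoneOn (fun x => x / a x) (Set.Ioi 0)

/-- Auxiliary predicate preserved by the iterated logarithm. -/
def goodP (a : ℝ → ℝ) : Prop :=
  MonotoneOn a (Set.Ici 0) ∧ (∀ x : ℝ, 0 ≤ x → 1 ≤ a x) ∧
    Filter.Tendsto a Filter.atTop Filter.atTop ∧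
    ∀ x y : ℝ, 0 ≤ x → x ≤ y → a y * (1 + x) ≤ a x * (1 + y)

lemma good_step (a : ℝ → ℝ) (h : goodP a) :
    goodP (fun x => Real.log (Real.exp 1 + a x)) := by
  obtain ⟨hmono, h1, htend, hrat⟩ := h
  have hpos : ∀ x : ℝ, 0 ≤ x → (0:ℝ) < Real.exp 1 + a x := by
    intro x hx
    have := h1 x hx
    have := Real.exp_pos 1
    linarith
  refine ⟨?_, ?_, ?_, ?_⟩
  · intro x hx y hy hxy
    exact Real.log_le_log (hpos x hx) (by linarith [hmono hx hy hxy])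
  · intro x hx
    rw [Real.le_log_iff_exp_le (hpos x hx)]
    linarith [h1 x hx]
  · exact Real.tendsto_log_atTop.comp
      (Filter.tendsto_atTop_add_const_left _ (Real.exp 1) htend)
  · intro x y hx hxy
    have hy : (0:ℝ) ≤ y := le_trans hx hxy
    have h1A : 1 ≤ a x := h1 x hx
    have hAB : a x ≤ a y := hmono hx hy hxy
    have hr : a y * (1 + x) ≤ a x * (1 + y) := hrat x y hx hxy
    have hx1 : (0:ℝ) < 1 + x := by linarith
    have hy1 : (0:ℝ) < 1 + y := by linarith
    set t : ℝ := (1 + y) / (1 + x) with ht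
    have ht1 : 1 ≤ t := (one_le_div hx1).mpr (by linarith)
    have htx : t * (1 + x) = 1 + y := div_mul_cancel₀ _ hx1.ne'
    have hBtA : a y ≤ t * a x := by
      rw [ht, div_mul_eq_mul_div, le_div_iff₀ hx1]
      linarith
    have he : Real.exp 1 + a y ≤ t * (Real.exp 1 + a x) := by
      nlinarith [Real.exp_pos 1]
    have hlogA : 1 ≤ Real.log (Real.exp 1 + a x) := by
      rw [Real.le_log_iff_exp_le (hpos x hx)]
      linarith
    have htpos : (0:ℝ) < t := lt_of_lt_of_le one_pos ht1
    have hlogB : Real.log (Real.exp 1 + a y) ≤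
        Real.log t + Real.log (Real.exp 1 + a x) := by
      rw [← Real.log_mul htpos.ne' (hpos x hx).ne']
      exact Real.log_le_log (hpos y hy) he
    have hlogt : Real.log t ≤ t - 1 := Real.log_le_sub_one_of_pos htpos
    have key : Real.log (Real.exp 1 + a y) ≤ t * Real.log (Real.exp 1 + a x) := by
      nlinarith
    calc Real.log (Real.exp 1 + a y) * (1 + x)
        ≤ (t * Real.log (Real.exp 1 + a x)) * (1 + x) :=
          mul_le_mul_of_nonneg_right key hx1.le
      _ = Real.log (Real.exp 1 + a x) * (1 + y) := by
          rw [mul_comm t, mul_assoc, htx]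

lemma good_memB0 (a : ℝ → ℝ) (h : goodP a) : memB0 a := by
  obtain ⟨hmono, h1, htend, hrat⟩ := h
  refine ⟨lt_of_lt_of_le one_pos (h1 0 le_rfl),
    fun x hx => le_trans zero_le_one (h1 x hx), hmono, htend, ?_⟩
  intro x hx y hy hxy
  simp only [Set.mem_Ioi] at hx hy
  have hax : (0:ℝ) < a x := lt_of_lt_of_le one_pos (h1 x hx.le)
  have hay : (0:ℝ) < a y := lt_of_lt_of_le one_pos (h1 y hy.le)
  rw [div_le_div_iff₀ hax hay]
  have hr : a y * (1 + x) ≤ a x * (1 + y) := hrat x y hx.le hxy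
  nlinarith [mul_le_mul_of_nonneg_left hr hx.le,
    mul_nonneg (sub_nonneg.mpr hxy) hax.le]

/-- each iterate `α_l`, `l ≥ 1`, belongs to the class `B₀`. -/
theorem stmt_1 (α : ℝ → ℝ)
    (hmono : MonotoneOn α (Set.Ici 0))
    (hconc : ConcaveOn ℝ (Set.Ici 0) α)
    (h0 : 1 ≤ α 0)
    (htend : Filter.Tendsto α Filter.atTop Filter.atTop)
    (hdiff : ∀ x : ℝ, 0 ≤ x → DifferentiableAt ℝ α x)
    (hder : ∀ x : ℝ, 0 ≤ x → deriv α x ≤ α x / (1 + x)) :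
    ∀ l : ℕ, 1 ≤ l → memB0 (iterLog α l) := by
  -- the base case of `goodP`: the ratio inequality via the derivative bound
  have h1 : ∀ x : ℝ, 0 ≤ x → 1 ≤ α x := fun x hx =>
    le_trans h0 (hmono (le_refl (0:ℝ)) hx hx)
  have hanti : AntitoneOn (fun x => α x / (1 + x)) (Set.Ici 0) := by
    have hconvD : Convex ℝ (Set.Ici (0:ℝ)) := convex_Ici 0
    have hcont : ContinuousOn α (Set.Ici 0) := fun x hx =>
      (hdiff x hx).continuousAt.continuousWithinAt
    have hne : ∀ x ∈ Set.Ici (0:ℝ), (1:ℝ) + x ≠ 0 := by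
      intro x hx; simp only [Set.mem_Ici] at hx; positivity
    apply antitoneOn_of_deriv_nonpos hconvD
    · exact hcont.div (by fun_prop) hne
    · rw [interior_Ici]
      intro x hx
      simp only [Set.mem_Ioi] at hx
      exact ((hdiff x hx.le).div (by fun_prop) (by positivity)).differentiableWithinAt
    · rw [interior_Ici]
      intro x hx
      simp only [Set.mem_Ioi] at hx
      have hx1 : (0:ℝ) < 1 + x := by linarith
      have hα := (hdiff x hx.le).hasDerivAt
      have hden : HasDerivAt (fun y : ℝ => 1 + y) 1 x := by
        simpa using (hasDerivAt_id x).const_add (1:ℝ)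
      have hg : HasDerivAt (fun y => α y / (1 + y))
          ((deriv α x * (1 + x) - α x * 1) / (1 + x) ^ 2) x :=
        hα.div hden hx1.ne'
      rw [hg.deriv]
      apply div_nonpos_of_nonpos_of_nonneg
      · have := hder x hx.le
        have h2 : deriv α x * (1 + x) ≤ α x := by
          rw [← le_div_iff₀ hx1]; exact this
        linarith
      · positivity
  have hgood0 : goodP α := by
    refine ⟨hmono, h1, htend, ?_⟩
    intro x y hx hxy
    have hy : (0:ℝ) ≤ y := le_trans hx hxy
    have := hanti (Set.mem_Ici.mpr hx) (Set.mem_Ici.mpr hy) hxy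
    have hx1 : (0:ℝ) < 1 + x := by linarith
    have hy1 : (0:ℝ) < 1 + y := by linarith
    exact (div_le_div_iff₀ hy1 hx1).mp this
  have hgood : ∀ l : ℕ, goodP (iterLog α l) := by
    intro l
    induction l with
    | zero => exact hgood0
    | succ n ih => exact good_step _ ih
  intro l _
  exact good_memB0 _ (hgood l)
end

section
/- For each l ≥ 1 there exists u₀ > 0 such that the function u ↦ log(1+u²) · α_l(√(1+u²)) is increasing and concave on [u₀, ∞). -/
open Real Set Filter

structure IsAdmissible (g : ℝ → ℝ) : Prop where
  one_le : ∀ x, 0 < x → 1 ≤ g x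
  differentiableAt : ∀ x, 0 < x → DifferentiableAt ℝ g x
  differentiableAt_deriv : ∀ x, 0 < x → DifferentiableAt ℝ (deriv g) x
  deriv_nonneg : ∀ x, 0 < x → 0 ≤ deriv g x
  deriv_le : ∀ x, 0 < x → deriv g x ≤ g x / (1 + x)
  deriv_deriv_nonpos : ∀ x, 0 < x → deriv (deriv g) x ≤ 0

namespace IsAdmissible

variable {g : ℝ → ℝ}

theorem monotoneOn (hg : IsAdmissible g) : MonotoneOn g (Ioi 0) :=
  monotoneOn_of_deriv_nonneg (convex_Ioi 0)
    (fun x hx => (hg.differentiableAt x hx).continuousAt.continuousWithinAt)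
    (fun x hx => (hg.differentiableAt x (interior_subset hx)).differentiableWithinAt)
    (fun x hx => hg.deriv_nonneg x (interior_subset hx))

theorem exp_one_add_pos (hg : IsAdmissible g) {x : ℝ} (hx : 0 < x) : 0 < exp 1 + g x := by
  linarith [hg.one_le x hx, exp_pos 1]

theorem hasDerivAt_log_exp_one_add (hg : IsAdmissible g) {x : ℝ} (hx : 0 < x) :
    HasDerivAt (fun y => log (exp 1 + g y)) (deriv g x / (exp 1 + g x)) x :=
  ((hg.differentiableAt x hx).hasDerivAt.const_add _).log (hg.exp_one_add_pos hx).ne'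

theorem deriv_log_exp_one_add (hg : IsAdmissible g) :
    EqOn (deriv fun y => log (exp 1 + g y)) (fun x => deriv g x / (exp 1 + g x)) (Ioi 0) :=
  fun _ hx => (hg.hasDerivAt_log_exp_one_add hx).deriv

theorem one_add_mul_deriv_log_exp_one_add_le (hg : IsAdmissible g) {x : ℝ} (hx : 0 < x) :
    (1 + x) * deriv (fun y => log (exp 1 + g y)) x ≤ 1 := by
  rw [hg.deriv_log_exp_one_add hx, mul_div_assoc', div_le_one (hg.exp_one_add_pos hx)]
  have := hg.deriv_le x hx
  rw [le_div_iff₀ (by linarith)] at this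
  linarith [exp_pos 1]

theorem log_exp_one_add_one_le (hg : IsAdmissible g) {x : ℝ} (hx : 0 < x) :
    1 ≤ log (exp 1 + g x) := calc
  1 = log (exp 1) := (log_exp 1).symm
  _ ≤ log (exp 1 + g x) := log_le_log (exp_pos 1) (by linarith [hg.one_le x hx])

theorem log_exp_one_add (hg : IsAdmissible g) : IsAdmissible fun x => log (exp 1 + g x) where
  one_le _ := hg.log_exp_one_add_one_le
  differentiableAt x hx := (hg.hasDerivAt_log_exp_one_add hx).differentiableAt
  differentiableAt_deriv x hx := by
    rw [(hg.deriv_log_exp_one_add.eventuallyEq_of_mem (Ioi_mem_nhds hx)).differentiableAt_iff]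
    exact (hg.differentiableAt_deriv x hx).div
      ((hg.differentiableAt x hx).const_add _) (hg.exp_one_add_pos hx).ne'
  deriv_nonneg x hx := by
    rw [hg.deriv_log_exp_one_add hx]
    exact div_nonneg (hg.deriv_nonneg x hx) (hg.exp_one_add_pos hx).le
  deriv_le x hx := by
    rw [le_div_iff₀ (by linarith), mul_comm]
    exact (hg.one_add_mul_deriv_log_exp_one_add_le hx).trans (hg.log_exp_one_add_one_le hx)
  deriv_deriv_nonpos x hx := by
    rw [(hg.deriv_log_exp_one_add.eventuallyEq_of_mem (Ioi_mem_nhds hx)).deriv_eq,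
      (((hg.differentiableAt_deriv x hx).hasDerivAt).fun_div
        ((hg.differentiableAt x hx).hasDerivAt.const_add _) (hg.exp_one_add_pos hx).ne').deriv]
    refine div_nonpos_of_nonpos_of_nonneg ?_ (sq_nonneg _)
    nlinarith [hg.deriv_deriv_nonpos x hx, hg.exp_one_add_pos hx, sq_nonneg (deriv g x)]

end IsAdmissible

theorem IsAdmissible.of_concaveOn {α : ℝ → ℝ} (hd1 : Differentiable ℝ α)
    (hd2 : Differentiable ℝ (deriv α)) (hmono : MonotoneOn α (Ici 0))
    (hconc : ConcaveOn ℝ (Ici 0) α) (h0 : 1 ≤ α 0)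
    (hder : ∀ x : ℝ, 0 ≤ x → deriv α x ≤ α x / (1 + x)) : IsAdmissible α where
  one_le x hx := h0.trans (hmono self_mem_Ici hx.le hx.le)
  differentiableAt x _ := hd1 x
  differentiableAt_deriv x _ := hd2 x
  deriv_nonneg x hx := by
    simpa only [derivWithin_of_isOpen isOpen_Ioi (mem_Ioi.mpr hx)]
      using (hmono.mono Ioi_subset_Ici_self).derivWithin_nonneg (x := x)
  deriv_le x hx := hder x hx.le
  deriv_deriv_nonpos x hx := by
    simpa only [derivWithin_of_isOpen isOpen_Ioi (mem_Ioi.mpr hx)]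
      using ((hconc.antitoneOn_deriv fun y _ => hd1 y).mono Ioi_subset_Ici_self).derivWithin_nonpos
        (x := x)

theorem IsAdmissible.iterLog {α : ℝ → ℝ} (hα : IsAdmissible α) :
    ∀ l, IsAdmissible (iterLog α l)
  | 0 => hα
  | l + 1 => (hα.iterLog l).log_exp_one_add

theorem tendsto_iterLog {α : ℝ → ℝ} (hα : Tendsto α atTop atTop) :
    ∀ l, Tendsto (iterLog α l) atTop atTop
  | 0 => hα
  | l + 1 => tendsto_log_atTop.comp (tendsto_atTop_add_const_left _ _ (tendsto_iterLog hα l))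

theorem le_sqrt_one_add_sq (u : ℝ) : u ≤ √(1 + u ^ 2) :=
  le_sqrt_of_sq_le (by linarith)

theorem hasDerivAt_sqrt_one_add_sq (u : ℝ) :
    HasDerivAt (fun u => √(1 + u ^ 2)) (u / √(1 + u ^ 2)) u := by
  convert ((hasDerivAt_pow 2 u).const_add 1).sqrt (by positivity) using 1
  norm_num
  ring

theorem hasDerivAt_div_sqrt_one_add_sq (u : ℝ) :
    HasDerivAt (fun u => u / √(1 + u ^ 2)) (1 / √(1 + u ^ 2) ^ 3) u := by
  have hs : 0 < √(1 + u ^ 2) := sqrt_pos.mpr (by positivity)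
  refine ((hasDerivAt_id' u).fun_div (hasDerivAt_sqrt_one_add_sq u) hs.ne').congr_deriv ?_
  have hs2 : √(1 + u ^ 2) ^ 2 = 1 + u ^ 2 := sq_sqrt (by positivity)
  field_simp
  linarith

theorem concaveOn_comp_sqrt_one_add_sq {G G' G'' : ℝ → ℝ} {s₀ u₀ : ℝ} (hu₀ : 0 ≤ u₀)
    (hs₀ : s₀ ≤ √(1 + u₀ ^ 2)) (hG : ∀ s, s₀ ≤ s → HasDerivAt G (G' s) s)
    (hG' : ∀ s, s₀ ≤ s → HasDerivAt G' (G'' s) s)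
    (hG'' : ∀ s, s₀ ≤ s → (s ^ 2 - 1) * G'' s + G' s / s ≤ 0) :
    ConcaveOn ℝ (Ici u₀) fun u => G √(1 + u ^ 2) := by
  have hs : ∀ u ∈ Ici u₀, s₀ ≤ √(1 + u ^ 2) := fun u hu =>
    hs₀.trans (sqrt_le_sqrt (by nlinarith [mem_Ici.mp hu]))
  have hF : ∀ u ∈ Ici u₀, HasDerivAt (fun u => G √(1 + u ^ 2))
      (G' √(1 + u ^ 2) * (u / √(1 + u ^ 2))) u := fun u hu =>
    (hG _ (hs u hu)).comp u (hasDerivAt_sqrt_one_add_sq u)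
  have hF' : ∀ u ∈ Ici u₀, HasDerivAt (fun u => G' √(1 + u ^ 2) * (u / √(1 + u ^ 2)))
      (G'' √(1 + u ^ 2) * (u / √(1 + u ^ 2)) * (u / √(1 + u ^ 2))
        + G' √(1 + u ^ 2) * (1 / √(1 + u ^ 2) ^ 3)) u := fun u hu =>
    ((hG' _ (hs u hu)).comp u (hasDerivAt_sqrt_one_add_sq u)).mul
      (hasDerivAt_div_sqrt_one_add_sq u)
  refine concaveOn_of_hasDerivWithinAt2_nonpos (convex_Ici u₀)
    (fun u hu => (hF u hu).continuousAt.continuousWithinAt)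
    (fun u hu => (hF u (interior_subset hu)).hasDerivWithinAt)
    (fun u hu => (hF' u (interior_subset hu)).hasDerivWithinAt) fun u hu => ?_
  have hs0 : 0 < √(1 + u ^ 2) := sqrt_pos.mpr (by positivity)
  have hs2 : √(1 + u ^ 2) ^ 2 = 1 + u ^ 2 := sq_sqrt (by positivity)
  calc _ = ((√(1 + u ^ 2) ^ 2 - 1) * G'' √(1 + u ^ 2) + G' √(1 + u ^ 2) / √(1 + u ^ 2))
        / √(1 + u ^ 2) ^ 2 := by
        rw [show √(1 + u ^ 2) ^ 2 - 1 = u ^ 2 by rw [hs2]; ring]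
        field_simp
    _ ≤ 0 := div_nonpos_of_nonpos_of_nonneg (hG'' _ (hs u (interior_subset hu)))
        (sq_nonneg _)

theorem IsAdmissible.monotoneOn_log_one_add_sq_mul {β : ℝ → ℝ} (hβ : IsAdmissible β) :
    MonotoneOn (fun u => log (1 + u ^ 2) * β √(1 + u ^ 2)) (Ici 0) := by
  have hs : ∀ u, 0 < √(1 + u ^ 2) := fun u => sqrt_pos.mpr (by positivity)
  refine MonotoneOn.mul (fun a ha b hb hab => ?_) (hβ.monotoneOn.comp (fun a ha b hb hab => ?_)
    fun u _ => hs u) (fun u _ => log_nonneg (by nlinarith)) fun u _ => ?_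
  · exact log_le_log (by positivity) (by nlinarith [mem_Ici.mp ha])
  · exact sqrt_le_sqrt (by nlinarith [mem_Ici.mp ha])
  · linarith [hβ.one_le _ (hs u)]

theorem IsAdmissible.concaveOn_log_one_add_sq_mul {β : ℝ → ℝ} (hβ : IsAdmissible β)
    (hβ' : ∀ s, 0 < s → (1 + s) * deriv β s ≤ 1) {u₀ : ℝ} (hu₀ : 3 ≤ u₀)
    (hβ3 : ∀ s, u₀ ≤ s → 3 ≤ β s) :
    ConcaveOn ℝ (Ici u₀) fun u => log (1 + u ^ 2) * β √(1 + u ^ 2) := by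
  have hlog_sqrt : (fun u => log (1 + u ^ 2) * β √(1 + u ^ 2)) =
      fun u => 2 * log √(1 + u ^ 2) * β √(1 + u ^ 2) := by
    ext u
    rw [log_sqrt (by positivity)]
    ring
  rw [hlog_sqrt]
  refine concaveOn_comp_sqrt_one_add_sq (by linarith) (le_sqrt_one_add_sq u₀)
    (G := fun s => 2 * log s * β s) (G' := fun s => 2 * (β s / s + log s * deriv β s))
    (G'' := fun s => 2 * (2 * deriv β s / s - β s / s ^ 2 + log s * deriv (deriv β) s))
    (fun s hs => ?_) (fun s hs => ?_) fun s hs => ?_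
  all_goals have hs0 : 0 < s := by linarith
  · exact (((hasDerivAt_log hs0.ne').const_mul 2).fun_mul
      (hβ.differentiableAt s hs0).hasDerivAt).congr_deriv (by field_simp)
  · exact ((((hβ.differentiableAt s hs0).hasDerivAt.fun_div (hasDerivAt_id' s) hs0.ne').add
      ((hasDerivAt_log hs0.ne').fun_mul (hβ.differentiableAt_deriv s hs0).hasDerivAt)).const_mul
        2).congr_deriv (by field_simp; ring)
  · have hb : 3 ≤ β s := hβ3 s hs
    have hp : 0 ≤ deriv β s := hβ.deriv_nonneg s hs0
    have hsp : s * deriv β s ≤ 1 := by nlinarith [hβ' s hs0]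
    have hq : deriv (deriv β) s ≤ 0 := hβ.deriv_deriv_nonpos s hs0
    have hlog : 0 ≤ log s := log_nonneg (by linarith)
    have hlog_le : log s ≤ s := log_le_self hs0.le
    set b := β s
    set p := deriv β s
    set q := deriv (deriv β) s
    rw [show (s ^ 2 - 1) * (2 * (2 * p / s - b / s ^ 2 + log s * q)) + 2 * (b / s + log s * p) / s
        = ((s ^ 2 - 1) * (4 * (s * p) - 2 * b + 2 * s ^ 2 * log s * q) + 2 * b
          + 2 * log s * (s * p)) / s ^ 2 by field_simp; ring]
    refine div_nonpos_of_nonpos_of_nonneg ?_ (sq_nonneg s)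
    have hs2 : 8 ≤ s ^ 2 - 1 := by nlinarith
    nlinarith [mul_le_mul_of_nonneg_left hsp (by linarith : (0:ℝ) ≤ s ^ 2 - 1),
      mul_le_mul_of_nonneg_left hsp hlog,
      mul_nonneg (by linarith : (0:ℝ) ≤ b - 3) (by linarith : (0:ℝ) ≤ s ^ 2 - 2),
      mul_nonpos_of_nonneg_of_nonpos (by positivity : 0 ≤ (s ^ 2 - 1) * s ^ 2 * log s) hq]

theorem stmt_4_general (α : ℝ → ℝ)
    (hd1 : Differentiable ℝ α)
    (hd2 : Differentiable ℝ (deriv α))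
    (hmono : MonotoneOn α (Set.Ici 0))
    (hconc : ConcaveOn ℝ (Set.Ici 0) α)
    (h0 : 1 ≤ α 0)
    (htend : Filter.Tendsto α Filter.atTop Filter.atTop)
    (hder : ∀ x : ℝ, 0 ≤ x → deriv α x ≤ α x / (1 + x)) :
    ∀ l : ℕ, 1 ≤ l → ∃ u₀ > (0:ℝ),
      MonotoneOn (fun u => Real.log (1 + u ^ 2) * iterLog α l (Real.sqrt (1 + u ^ 2)))
        (Set.Ici u₀) ∧
      ConcaveOn ℝ (Set.Ici u₀)
        (fun u => Real.log (1 + u ^ 2) * iterLog α l (Real.sqrt (1 + u ^ 2))) := by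
  rintro (_ | l) hl
  · omega
  have hα := IsAdmissible.of_concaveOn hd1 hd2 hmono hconc h0 hder
  have hβ : IsAdmissible (iterLog α (l + 1)) := hα.iterLog (l + 1)
  obtain ⟨T, hT⟩ := eventually_atTop.mp ((tendsto_iterLog htend (l + 1)).eventually_ge_atTop 3)
  refine ⟨max T 3, by positivity, ?_, ?_⟩
  · exact hβ.monotoneOn_log_one_add_sq_mul.mono (Ici_subset_Ici.mpr (by positivity))
  · exact hβ.concaveOn_log_one_add_sq_mul
      (fun _ => (hα.iterLog l).one_add_mul_deriv_log_exp_one_add_le) (le_max_right T 3)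
      fun s hs => hT s ((le_max_left T 3).trans hs)

/-- for each `l ≥ 1` there is `u₀ > 0` such that
`u ↦ log(1+u²) · α_l(√(1+u²))` is increasing and concave on `[u₀, ∞)`. -/
theorem stmt_4 (α : ℝ → ℝ) (c : ℝ) (hc : 0 < c)
    (hd1 : Differentiable ℝ α)
    (hd2 : Differentiable ℝ (deriv α))
    (hmono : MonotoneOn α (Set.Ici 0))
    (hconc : ConcaveOn ℝ (Set.Ici 0) α)
    (h0 : 1 ≤ α 0)
    (htend : Filter.Tendsto α Filter.atTop Filter.atTop)
    (hder : ∀ x : ℝ, 0 ≤ x → deriv α x ≤ α x / (1 + x))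
    (hder2 : ∀ x : ℝ, 0 ≤ x → -(c / (1 + x)) ≤ deriv (deriv α) x) :
    ∀ l : ℕ, 1 ≤ l → ∃ u₀ > (0:ℝ),
      MonotoneOn (fun u => Real.log (1 + u ^ 2) * iterLog α l (Real.sqrt (1 + u ^ 2)))
        (Set.Ici u₀) ∧
      ConcaveOn ℝ (Set.Ici u₀)
        (fun u => Real.log (1 + u ^ 2) * iterLog α l (Real.sqrt (1 + u ^ 2))) :=
  stmt_4_general α hd1 hd2 hmono hconc h0 htend hder
end

section
/- Let g : [0,∞) → ℝ be nonnegative, increasing, and concave on [u₀,∞) for some u₀ ≥ 0, with g increasing on [0,∞). Then for all 0 ≤ s ≤ t, g(t) - g(s) ≤ g(u₀ + t - s). -/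
/-!
If `s ≤ u₀`, monotonicity gives `g t ≤ g (u₀ + t - s)` and `g s ≥ 0`. If `u₀ < s`, the points
`s` and `u₀ + t - s` lie in `[u₀, t]` and have the same sum as `u₀` and `t`, so concavity gives
`g u₀ + g t ≤ g s + g (u₀ + t - s)`, and `g u₀ ≥ 0`.
-/

theorem ConcaveOn.map_add_map_le_of_add_eq {𝕜 β : Type*} [Field 𝕜] [LinearOrder 𝕜]
    [IsStrictOrderedRing 𝕜] [AddCommGroup β] [PartialOrder β] [IsOrderedAddMonoid β]
    [Module 𝕜 β] {s : Set 𝕜} {f : 𝕜 → β} (hf : ConcaveOn 𝕜 s f) {a b x y : 𝕜}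
    (ha : a ∈ s) (hb : b ∈ s) (hax : a ≤ x) (hxb : x ≤ b) (hxy : x + y = a + b) :
    f a + f b ≤ f x + f y := by
  rcases hax.eq_or_lt with rfl | hax
  · obtain rfl : y = b := by linarith
    exact le_rfl
  have hab : 0 < b - a := by linarith
  set θ := (b - x) / (b - a)
  have hθ₀ : 0 ≤ θ := div_nonneg (by linarith) hab.le
  have hθ₁ : 0 ≤ 1 - θ := by
    rw [sub_nonneg, div_le_one hab]
    linarith
  have hx : θ • a + (1 - θ) • b = x := by
    simp only [θ, smul_eq_mul]
    field_simp
    ring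
  have hy : (1 - θ) • a + θ • b = y := by
    obtain rfl : y = a + b - x := by linarith
    simp only [θ, smul_eq_mul]
    field_simp
    ring
  have h₁ := hf.2 ha hb hθ₀ hθ₁ (add_sub_cancel θ 1)
  have h₂ := hf.2 ha hb hθ₁ hθ₀ (sub_add_cancel 1 θ)
  rw [hx] at h₁
  rw [hy] at h₂
  calc f a + f b = (θ • f a + (1 - θ) • f b) + ((1 - θ) • f a + θ • f b) := by module
    _ ≤ f x + f y := add_le_add h₁ h₂

/-- increment bound for an increasing, eventually concave,
nonnegative function: `g t - g s ≤ g (u₀ + t - s)`. -/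
theorem stmt_5 (g : ℝ → ℝ) (u₀ : ℝ) (hu₀ : 0 ≤ u₀)
    (hnonneg : ∀ x : ℝ, 0 ≤ x → 0 ≤ g x)
    (hmono : MonotoneOn g (Set.Ici 0))
    (hconc : ConcaveOn ℝ (Set.Ici u₀) g) :
    ∀ s t : ℝ, 0 ≤ s → s ≤ t → g t - g s ≤ g (u₀ + t - s) := by
  intro s t hs hst
  rcases le_or_gt s u₀ with hsu | hus
  · have hgt : g t ≤ g (u₀ + t - s) :=
      hmono (hs.trans hst) (Set.mem_Ici.2 (by linarith)) (by linarith)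
    linarith [hnonneg s hs]
  · have hconc_ineq : g u₀ + g t ≤ g s + g (u₀ + t - s) :=
      hconc.map_add_map_le_of_add_eq Set.self_mem_Ici (Set.mem_Ici.2 (hus.le.trans hst))
        hus.le hst (by ring)
    linarith [hnonneg u₀ hu₀]
end

section
/- For each l ≥ 1 there are constants c₃, c₄ > 0 such that for all x, y ∈ ℝ^d and all λ ≥ 0, θ^{(l)}(x,λ) ≤ c₃ · θ^{(l)}(y,λ) · exp[c₄ · log(1+|x-y|²) · α_l(1+|x-y|²)]. -/
/-- The modified `θ`-function
`θ^{(l)}(x,λ) = exp[-(λ/α_l(λ)^{1/2})·(1+λ²+log(1+|x|²)·α_l(√(1+|x|²)))^{1/2}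
                 - log(1+|x|²)·α_l(√(1+|x|²))]`. -/
noncomputable def theta (α : ℝ → ℝ) (l : ℕ) {d : ℕ}
    (x : EuclideanSpace ℝ (Fin d)) (lam : ℝ) : ℝ :=
  Real.exp (-(lam / Real.sqrt (iterLog α l lam)) *
      Real.sqrt (1 + lam ^ 2 +
        Real.log (1 + ‖x‖ ^ 2) * iterLog α l (Real.sqrt (1 + ‖x‖ ^ 2))) -
    Real.log (1 + ‖x‖ ^ 2) * iterLog α l (Real.sqrt (1 + ‖x‖ ^ 2)))

open Real Set

lemma log_sub_log_le_div {x y : ℝ} (hx : 0 < x) (hy : 0 < y) : log y - log x ≤ (y - x) / x := by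
  rw [← log_div hy.ne' hx.ne', sub_div, div_self hx.ne']
  exact log_le_sub_one_of_pos (div_pos hy hx)

lemma antitoneOn_div_one_add {α : ℝ → ℝ} (hd : Differentiable ℝ α)
    (hder : ∀ x : ℝ, 0 ≤ x → deriv α x ≤ α x / (1 + x)) :
    AntitoneOn (fun t => α t / (1 + t)) (Ici 0) := by
  have hpos : ∀ t ∈ Ici (0 : ℝ), 0 < 1 + t := fun t ht => by simp at ht; linarith
  refine antitoneOn_of_hasDerivWithinAt_nonpos (convex_Ici 0)
    (fun t ht => ((hd t).continuousAt.div (by fun_prop) (hpos t ht).ne').continuousWithinAt)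
    (fun t ht => ((hd t).hasDerivAt.div ((hasDerivAt_id t).const_add 1)
      (hpos t (interior_subset ht)).ne').hasDerivWithinAt) fun t ht => ?_
  have h1t := hpos t (interior_subset ht)
  have := (le_div_iff₀ h1t).1 (hder t (interior_subset ht))
  simp only [id, mul_one]
  exact div_nonpos_of_nonpos_of_nonneg (by linarith) (by positivity)

lemma antitoneOn_log_exp_add_sub_log {f : ℝ → ℝ} (hf0 : ∀ t, 0 ≤ t → 0 ≤ f t)
    (hf : AntitoneOn (fun t => f t / (1 + t)) (Ici 0)) :
    AntitoneOn (fun t => log (exp 1 + f t) - log (1 + t)) (Ici 0) := by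
  intro u hu v hv huv
  have h1u : 0 < 1 + u := by simp only [mem_Ici] at hu; linarith
  have h1v : 0 < 1 + v := by linarith
  have hfv : f v * (1 + u) ≤ f u * (1 + v) := (div_le_div_iff₀ h1v h1u).1 (hf hu hv huv)
  have hE : (exp 1 + f v) * (1 + u) ≤ (exp 1 + f u) * (1 + v) := by nlinarith [exp_pos 1]
  have hEu : 0 < exp 1 + f u := by linarith [exp_pos 1, hf0 u hu]
  have hEv : 0 < exp 1 + f v := by linarith [exp_pos 1, hf0 v hv]
  simp only
  rw [sub_le_sub_iff, ← log_mul hEv.ne' h1u.ne', ← log_mul hEu.ne' h1v.ne']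
  exact log_le_log (by positivity) hE

lemma antitoneOn_div_one_add_of_sub_log {g : ℝ → ℝ} (hg : ∀ t, 0 ≤ t → 1 ≤ g t)
    (h : AntitoneOn (fun t => g t - log (1 + t)) (Ici 0)) :
    AntitoneOn (fun t => g t / (1 + t)) (Ici 0) := by
  intro u hu v hv huv
  have h1u : 0 < 1 + u := by simp only [mem_Ici] at hu; linarith
  have h1v : 0 < 1 + v := by linarith
  have hlog := log_sub_log_le_div h1u h1v
  rw [add_sub_add_left_eq_sub] at hlog
  have hgv : g v - g u ≤ (v - u) / (1 + u) := by linarith [h hu hv huv]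
  have hscale : (v - u) / (1 + u) ≤ g u * ((v - u) / (1 + u)) :=
    le_mul_of_one_le_left (div_nonneg (by linarith) h1u.le) (hg u hu)
  have key : g v ≤ g u * ((1 + v) / (1 + u)) := by
    have hsplit : g u * ((1 + v) / (1 + u)) = g u + g u * ((v - u) / (1 + u)) := by
      field_simp; ring
    linarith
  simp only
  rwa [div_le_div_iff₀ h1v h1u, ← le_div_iff₀ h1u, mul_div_assoc]

section IterLog

variable {α : ℝ → ℝ}

lemma iterLog_succ (α : ℝ → ℝ) (k : ℕ) (t : ℝ) :
    iterLog α (k + 1) t = log (exp 1 + iterLog α k t) := rfl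

lemma one_le_iterLog (hmono : MonotoneOn α (Ici 0)) (h0 : 1 ≤ α 0) :
    ∀ k t, 0 ≤ t → 1 ≤ iterLog α k t
  | 0, t, ht => h0.trans (hmono self_mem_Ici ht ht)
  | k + 1, t, ht => by
    rw [iterLog_succ]
    exact (log_exp 1).ge.trans
      (log_le_log (exp_pos 1) (by linarith [one_le_iterLog hmono h0 k t ht]))

lemma monotoneOn_iterLog (hmono : MonotoneOn α (Ici 0)) (h0 : 1 ≤ α 0) :
    ∀ k, MonotoneOn (iterLog α k) (Ici 0)
  | 0 => hmono
  | k + 1 => fun u hu v hv huv => by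
    rw [iterLog_succ, iterLog_succ]
    exact log_le_log (by linarith [exp_pos 1, one_le_iterLog hmono h0 k u hu])
      (by linarith [monotoneOn_iterLog hmono h0 k hu hv huv])

lemma antitoneOn_iterLog_div (hd : Differentiable ℝ α) (hmono : MonotoneOn α (Ici 0))
    (h0 : 1 ≤ α 0) (hder : ∀ x : ℝ, 0 ≤ x → deriv α x ≤ α x / (1 + x)) :
    ∀ k, AntitoneOn (fun t => iterLog α k t / (1 + t)) (Ici 0)
  | 0 => antitoneOn_div_one_add hd hder
  | k + 1 => antitoneOn_div_one_add_of_sub_log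
    (one_le_iterLog hmono h0 (k + 1))
    (antitoneOn_log_exp_add_sub_log
      (fun t ht => zero_le_one.trans (one_le_iterLog hmono h0 k t ht))
      (antitoneOn_iterLog_div hd hmono h0 hder k))

lemma antitoneOn_iterLog_succ_sub_log (hd : Differentiable ℝ α) (hmono : MonotoneOn α (Ici 0))
    (h0 : 1 ≤ α 0) (hder : ∀ x : ℝ, 0 ≤ x → deriv α x ≤ α x / (1 + x)) (k : ℕ) :
    AntitoneOn (fun t => iterLog α (k + 1) t - log (1 + t)) (Ici 0) :=
  antitoneOn_log_exp_add_sub_log (fun t ht => zero_le_one.trans (one_le_iterLog hmono h0 k t ht))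
    (antitoneOn_iterLog_div hd hmono h0 hder k)

end IterLog

lemma div_mul_log_le {S X : ℝ} (hS : 1 ≤ S) (hSX : S ≤ X) : S / X * log X ≤ log S + 1 := by
  have hS0 : 0 < S := by linarith
  have hX0 : 0 < X := by linarith
  have hr1 : S / X ≤ 1 := (div_le_one hX0).2 hSX
  have hsplit : log X = log S + log (X / S) := by rw [log_div hX0.ne' hS0.ne']; ring
  calc S / X * log X = S / X * log S + S / X * log (X / S) := by rw [hsplit]; ring
    _ ≤ log S + S / X * (X / S) :=
      add_le_add (mul_le_of_le_one_left (log_nonneg hS) hr1)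
        (mul_le_mul_of_nonneg_left (log_le_self (by positivity)) (by positivity))
    _ = log S + 1 := by field_simp

section SlowGrowth

variable {g : ℝ → ℝ}

lemma monotoneOn_log_mul (hg : ∀ t, 0 ≤ t → 0 ≤ g t) (hmono : MonotoneOn g (Ici 0)) :
    MonotoneOn (fun t => log t * g t) (Ici 1) := by
  intro s hs t ht hst
  simp only [mem_Ici] at hs ht
  exact mul_le_mul (log_le_log (by linarith) hst)
    (hmono (mem_Ici.2 (by linarith)) (mem_Ici.2 (by linarith)) hst) (hg s (by linarith))
    (log_nonneg ht)

lemma log_mul_le_of_le_add (hg : ∀ t, 0 ≤ t → 0 ≤ g t)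
    (hlog : AntitoneOn (fun t => g t - log (1 + t)) (Ici 0))
    {S X Y : ℝ} (hS : 1 ≤ S) (hSX : S ≤ X) (hXY : X ≤ Y) (hYXS : Y ≤ X + S) :
    log Y * g Y ≤ log X * g X + (2 * log S + g 0 + 4) := by
  have hX0 : 0 < X := by linarith
  set r := S / X
  have hr0 : 0 ≤ r := by positivity
  have hr1 : r ≤ 1 := (div_le_one hX0).2 hSX
  have hYX : (Y - X) / X ≤ r := div_le_div_of_nonneg_right (by linarith) hX0.le
  have hlogY : log Y ≤ log X + r := by
    linarith [log_sub_log_le_div hX0 (by linarith : 0 < Y)]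
  have hgY : g Y ≤ g X + r := by
    have h1 := log_sub_log_le_div (by linarith : 0 < 1 + X) (by linarith : 0 < 1 + Y)
    have h2 : (1 + Y - (1 + X)) / (1 + X) ≤ (Y - X) / X := by
      rw [add_sub_add_left_eq_sub]
      exact div_le_div_of_nonneg_left (by linarith) hX0 (by linarith)
    linarith [hlog (mem_Ici.2 hX0.le) (mem_Ici.2 (by linarith)) hXY]
  have hgX : g X ≤ g 0 + 1 + log X := by
    have h1 := log_sub_log_le_div hX0 (by linarith : 0 < 1 + X)
    have h2 : (1 + X - X) / X ≤ 1 := by rw [add_sub_cancel_right, div_le_one hX0]; linarith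
    have h3 := hlog (mem_Ici.2 le_rfl) (mem_Ici.2 hX0.le) hX0.le
    simp only [add_zero, log_one, sub_zero] at h3
    linarith
  have hg0 := hg 0 le_rfl
  have hrg : r * g X ≤ g 0 + 1 + r * log X := by
    nlinarith [mul_le_mul_of_nonneg_left hgX hr0]
  calc log Y * g Y ≤ (log X + r) * (g X + r) :=
        mul_le_mul hlogY hgY (hg Y (by linarith)) (by linarith [log_nonneg (by linarith : 1 ≤ X)])
    _ = log X * g X + r * g X + r * log X + r * r := by ring
    _ ≤ log X * g X + (2 * log S + g 0 + 4) := by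
        nlinarith [div_mul_log_le hS hSX, mul_le_one₀ hr1 hr0 hr1]

lemma log_mul_le_add (hg : ∀ t, 0 ≤ t → 0 ≤ g t) (hmono : MonotoneOn g (Ici 0))
    (hlog : AntitoneOn (fun t => g t - log (1 + t)) (Ici 0))
    {S X Y : ℝ} (hS : 1 ≤ S) (hX : 1 ≤ X) (hY : 1 ≤ Y) (hYXS : Y ≤ X + S) :
    log Y * g Y ≤ log X * g X + (log S * g S + 2 * log S + g 0 + 4) := by
  have hmul := monotoneOn_log_mul hg hmono
  have hlogX : 0 ≤ log X * g X := mul_nonneg (log_nonneg hX) (hg X (by linarith))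
  have hlogS : 0 ≤ log S * g S := mul_nonneg (log_nonneg hS) (hg S (by linarith))
  have hrest : 0 ≤ 2 * log S + g 0 + 4 := by linarith [log_nonneg hS, hg 0 le_rfl]
  rcases le_total Y X with hYX | hXY
  · linarith [hmul (mem_Ici.2 hY) (mem_Ici.2 hX) hYX]
  rcases le_total X S with hXS | hSX
  · have h2S := log_mul_le_of_le_add hg hlog hS le_rfl (by linarith : S ≤ 2 * S) (two_mul S).le
    linarith [hmul (mem_Ici.2 hY) (mem_Ici.2 (by linarith : 1 ≤ 2 * S)) (by linarith : Y ≤ 2 * S)]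
  · linarith [log_mul_le_of_le_add hg hlog hS hSX hXY hYXS]

end SlowGrowth

lemma mul_sqrt_sub_sqrt_le {t a b M : ℝ} (ht : 0 ≤ t) (htb : t ≤ √b) (ha : 0 ≤ a) (hb : 0 ≤ b)
    (hab : a ≤ b + M) (hM : 0 ≤ M) : t * (√a - √b) ≤ M := by
  rcases le_total √a √b with h | h
  · exact (mul_nonpos_of_nonneg_of_nonpos ht (sub_nonpos.2 h)).trans hM
  calc t * (√a - √b) ≤ (√a + √b) * (√a - √b) :=
        mul_le_mul_of_nonneg_right (by linarith [sqrt_nonneg a]) (sub_nonneg.2 h)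
    _ = a - b := by rw [← sq_sub_sq, sq_sqrt ha, sq_sqrt hb]
    _ ≤ M := by linarith

lemma sqrt_one_add_sq_le {a b c : ℝ} (hb : 0 ≤ b) (hc : 0 ≤ c) (h : c ≤ a + b) :
    √(1 + c ^ 2) ≤ √(1 + a ^ 2) + √(1 + b ^ 2) := by
  have ha : a ≤ √(1 + a ^ 2) := le_sqrt_of_sq_le (by linarith)
  have hb' : b ≤ √(1 + b ^ 2) := le_sqrt_of_sq_le (by linarith)
  have hsq := sq_sqrt (by positivity : (0 : ℝ) ≤ 1 + a ^ 2)
  calc √(1 + c ^ 2) ≤ √(1 + a ^ 2) + b :=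
        sqrt_le_iff.2 ⟨by positivity, by nlinarith [mul_le_mul_of_nonneg_left ha hb]⟩
    _ ≤ √(1 + a ^ 2) + √(1 + b ^ 2) := by linarith

section Weight

variable {E : Type*} [SeminormedAddCommGroup E]

/-- The weight `log(1+|x|²) · α_l(√(1+|x|²))` that appears twice in `θ^{(l)}(x,λ)`. -/
noncomputable def thetaWeight (g : ℝ → ℝ) (x : E) : ℝ :=
  log (1 + ‖x‖ ^ 2) * g √(1 + ‖x‖ ^ 2)

lemma thetaWeight_eq (g : ℝ → ℝ) (x : E) :
    thetaWeight g x = 2 * (log √(1 + ‖x‖ ^ 2) * g √(1 + ‖x‖ ^ 2)) := by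
  rw [thetaWeight, log_sqrt (by positivity)]
  ring

lemma thetaWeight_nonneg {g : ℝ → ℝ} (hg : ∀ t, 0 ≤ t → 0 ≤ g t) (x : E) : 0 ≤ thetaWeight g x :=
  mul_nonneg (log_nonneg (by nlinarith [sq_nonneg ‖x‖])) (hg _ (sqrt_nonneg _))

lemma thetaWeight_le_add {g : ℝ → ℝ} (hg : ∀ t, 0 ≤ t → 0 ≤ g t) (hmono : MonotoneOn g (Ici 0))
    (hlog : AntitoneOn (fun t => g t - log (1 + t)) (Ici 0)) (x y : E) :
    thetaWeight g y ≤ thetaWeight g x + 2 * (log √(1 + ‖x - y‖ ^ 2) * g √(1 + ‖x - y‖ ^ 2) +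
      2 * log √(1 + ‖x - y‖ ^ 2) + g 0 + 4) := by
  have hone : ∀ z : E, 1 ≤ √(1 + ‖z‖ ^ 2) := fun z => one_le_sqrt.2 (by nlinarith [sq_nonneg ‖z‖])
  rw [thetaWeight_eq, thetaWeight_eq]
  linarith [log_mul_le_add hg hmono hlog (hone (x - y)) (hone x) (hone y)
    (sqrt_one_add_sq_le (norm_nonneg _) (norm_nonneg y) (norm_le_norm_add_norm_sub x y))]

end Weight

lemma theta_eq (α : ℝ → ℝ) (l : ℕ) {d : ℕ} (x : EuclideanSpace ℝ (Fin d)) (lam : ℝ) :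
    theta α l x lam = exp (-(lam / √(iterLog α l lam)) *
      √(1 + lam ^ 2 + thetaWeight (iterLog α l) x) - thetaWeight (iterLog α l) x) := rfl

lemma theta_le_exp_mul_theta {α : ℝ → ℝ} {l d : ℕ} {x y : EuclideanSpace ℝ (Fin d)} {lam M : ℝ}
    (hlam : 0 ≤ lam) (hg : 1 ≤ iterLog α l lam) (hx : 0 ≤ thetaWeight (iterLog α l) x)
    (hy : 0 ≤ thetaWeight (iterLog α l) y)
    (hxy : thetaWeight (iterLog α l) y ≤ thetaWeight (iterLog α l) x + M) (hM : 0 ≤ M) :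
    theta α l x lam ≤ exp (2 * M) * theta α l y lam := by
  rw [theta_eq, theta_eq, ← exp_add, exp_le_exp]
  set q := lam / √(iterLog α l lam)
  have hq : q ≤ lam := div_le_self hlam (one_le_sqrt.2 hg)
  have hlam' : lam ≤ √(1 + lam ^ 2 + thetaWeight (iterLog α l) x) :=
    le_sqrt_of_sq_le (by linarith)
  have := mul_sqrt_sub_sqrt_le (a := 1 + lam ^ 2 + thetaWeight (iterLog α l) y)
    (by positivity : 0 ≤ q) (hq.trans hlam') (by positivity) (by positivity) (by linarith) hM
  linarith

theorem stmt_6_general (d : ℕ) (α : ℝ → ℝ)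
    (hd1 : Differentiable ℝ α)
    (hmono : MonotoneOn α (Set.Ici 0))
    (h0 : 1 ≤ α 0)
    (hder : ∀ x : ℝ, 0 ≤ x → deriv α x ≤ α x / (1 + x)) :
    ∀ l : ℕ, 1 ≤ l → ∃ c₃ > (0:ℝ), ∃ c₄ > (0:ℝ),
      ∀ (x y : EuclideanSpace ℝ (Fin d)) (lam : ℝ), 0 ≤ lam →
        theta α l x lam ≤ c₃ * theta α l y lam *
          Real.exp (c₄ * Real.log (1 + ‖x - y‖ ^ 2) * iterLog α l (1 + ‖x - y‖ ^ 2)) := by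
  intro l hl
  obtain ⟨k, rfl⟩ : ∃ k, l = k + 1 := ⟨l - 1, by omega⟩
  set g := iterLog α (k + 1)
  have hg1 : ∀ t, 0 ≤ t → 1 ≤ g t := one_le_iterLog hmono h0 (k + 1)
  have hg0 : ∀ t, 0 ≤ t → 0 ≤ g t := fun t ht => zero_le_one.trans (hg1 t ht)
  have hgmono : MonotoneOn g (Ici 0) := monotoneOn_iterLog hmono h0 (k + 1)
  have hglog := antitoneOn_iterLog_succ_sub_log hd1 hmono h0 hder k
  refine ⟨exp (4 * g 0 + 16), exp_pos _, 6, by norm_num, fun x y lam hlam => ?_⟩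
  set s := 1 + ‖x - y‖ ^ 2
  have hs : 1 ≤ s := by nlinarith [sq_nonneg ‖x - y‖]
  have hlogS : 0 ≤ log √s := log_nonneg (one_le_sqrt.2 hs)
  have hgS : g √s ≤ g s := hgmono (mem_Ici.2 (sqrt_nonneg s)) (mem_Ici.2 (by linarith))
    ((sqrt_le_left (by linarith)).2 (by nlinarith))
  have hG := hg1 s (by positivity)
  calc theta α (k + 1) x lam
      ≤ exp (2 * (2 * (log √s * g √s + 2 * log √s + g 0 + 4))) * theta α (k + 1) y lam :=
        theta_le_exp_mul_theta hlam (hg1 lam hlam) (thetaWeight_nonneg hg0 x)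
          (thetaWeight_nonneg hg0 y) (thetaWeight_le_add hg0 hgmono hglog x y)
          (by nlinarith [hg0 √s (sqrt_nonneg s), hg1 0 le_rfl])
    _ ≤ exp (4 * g 0 + 16) * theta α (k + 1) y lam * exp (6 * log s * g s) := by
        have hlog : log s = 2 * log √s := by rw [log_sqrt (by linarith)]; ring
        rw [mul_right_comm, ← exp_add, hlog]
        refine mul_le_mul_of_nonneg_right (exp_le_exp.2 ?_) (exp_pos _).le
        nlinarith [mul_le_mul_of_nonneg_left hgS hlogS, le_mul_of_one_le_right hlogS hG]

/-- Lemma A.1'(c): translation estimate for `θ^{(l)}`. -/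
theorem stmt_6 (d : ℕ) (α : ℝ → ℝ) (c : ℝ) (hc : 0 < c)
    (hd1 : Differentiable ℝ α)
    (hd2 : Differentiable ℝ (deriv α))
    (hmono : MonotoneOn α (Set.Ici 0))
    (hconc : ConcaveOn ℝ (Set.Ici 0) α)
    (h0 : 1 ≤ α 0)
    (htend : Filter.Tendsto α Filter.atTop Filter.atTop)
    (hder : ∀ x : ℝ, 0 ≤ x → deriv α x ≤ α x / (1 + x))
    (hder2 : ∀ x : ℝ, 0 ≤ x → -(c / (1 + x)) ≤ deriv (deriv α) x) :
    ∀ l : ℕ, 1 ≤ l → ∃ c₃ > (0:ℝ), ∃ c₄ > (0:ℝ),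
      ∀ (x y : EuclideanSpace ℝ (Fin d)) (lam : ℝ), 0 ≤ lam →
        theta α l x lam ≤ c₃ * theta α l y lam *
          Real.exp (c₄ * Real.log (1 + ‖x - y‖ ^ 2) * iterLog α l (1 + ‖x - y‖ ^ 2)) :=
  stmt_6_general d α hd1 hmono h0 hder
end

section
/- For any l ≥ 1 and ε > 0, there exist constants c₅ > 0 and c₆(ε) > 0 such that for all x ∈ ℝ^d and λ ≥ 0: exp[-ε·log(1+|x|²)·α_l(1+|x|²)] ≤ θ^{(l+1)}(x,λ) · exp[c₅·(λ/α_{l+1}(λ)^{1/2})·(1+λ) + c₆(ε)]. -/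
lemma iterLog_ge_one (α : ℝ → ℝ) (hmono : MonotoneOn α (Set.Ici 0)) (h0 : 1 ≤ α 0) :
    ∀ l : ℕ, ∀ t : ℝ, 0 ≤ t → 1 ≤ iterLog α l t := by
  intro l
  induction l with
  | zero =>
    intro t ht
    exact h0.trans (hmono (Set.mem_Ici.mpr le_rfl) (Set.mem_Ici.mpr ht) ht)
  | succ n ih =>
    intro t ht
    have h1 := ih t ht
    show 1 ≤ Real.log (Real.exp 1 + iterLog α n t)
    calc (1:ℝ) = Real.log (Real.exp 1) := (Real.log_exp 1).symm
      _ ≤ _ := Real.log_le_log (Real.exp_pos 1) (by linarith)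

lemma iterLog_mono (α : ℝ → ℝ) (hmono : MonotoneOn α (Set.Ici 0)) (h0 : 1 ≤ α 0) :
    ∀ l : ℕ, ∀ s t : ℝ, 0 ≤ s → s ≤ t → iterLog α l s ≤ iterLog α l t := by
  intro l
  induction l with
  | zero =>
    intro s t hs hst
    exact hmono (Set.mem_Ici.mpr hs) (Set.mem_Ici.mpr (hs.trans hst)) hst
  | succ n ih =>
    intro s t hs hst
    have h1 := iterLog_ge_one α hmono h0 n s hs
    have h2 := ih s t hs hst
    show Real.log (Real.exp 1 + iterLog α n s) ≤ Real.log (Real.exp 1 + iterLog α n t)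
    exact Real.log_le_log (by have := Real.exp_pos 1; linarith) (by linarith)

lemma iterLog_tendsto (α : ℝ → ℝ) (htend : Filter.Tendsto α Filter.atTop Filter.atTop) :
    ∀ l : ℕ, Filter.Tendsto (iterLog α l) Filter.atTop Filter.atTop := by
  intro l
  induction l with
  | zero => exact htend
  | succ n ih =>
    have h1 : Filter.Tendsto (fun x => Real.exp 1 + iterLog α n x) Filter.atTop Filter.atTop :=
      Filter.tendsto_atTop_add_const_left _ _ ih
    have h2 := Real.tendsto_log_atTop.comp h1
    show Filter.Tendsto (fun x => Real.log (Real.exp 1 + iterLog α n x)) Filter.atTop Filter.atTop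
    exact h2

lemma key_bound (α : ℝ → ℝ) (hmono : MonotoneOn α (Set.Ici 0)) (h0 : 1 ≤ α 0)
    (htend : Filter.Tendsto α Filter.atTop Filter.atTop) (l : ℕ) (ε : ℝ) (hε : 0 < ε) :
    ∃ c₆ > (0:ℝ), ∀ t : ℝ, 1 ≤ t →
      (3/2) * Real.log t * iterLog α (l+1) t ≤ ε * Real.log t * iterLog α l t + c₆ := by
  -- eventually in s : (3/2) * log (e + s) ≤ ε * s
  have h1 : ∀ᶠ s : ℝ in Filter.atTop, (3/2) * Real.log (Real.exp 1 + s) ≤ ε * s := by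
    have hlo := Asymptotics.isLittleO_iff.mp Real.isLittleO_log_id_atTop
      (show (0:ℝ) < ε/3 by positivity)
    filter_upwards [hlo, Filter.eventually_ge_atTop (Real.exp 1),
      Filter.eventually_ge_atTop (3/ε)] with s hs hse hs3
    have hspos : 0 < s := lt_of_lt_of_le (Real.exp_pos 1) hse
    have h2s : Real.exp 1 + s ≤ 2 * s := by linarith
    have hlog : Real.log (Real.exp 1 + s) ≤ Real.log 2 + Real.log s := by
      have := Real.log_le_log (by positivity) h2s
      rwa [Real.log_mul (by norm_num) (ne_of_gt hspos)] at this
    have hlog2 : Real.log 2 ≤ 1 := by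
      rw [← Real.log_exp 1]
      exact Real.log_le_log (by norm_num)
        (by have := Real.add_one_le_exp 1; linarith)
    have hls : Real.log s ≤ ε/3 * s := by
      have h := hs
      rw [Real.norm_eq_abs, Real.norm_eq_abs, id, abs_of_pos hspos] at h
      exact (le_abs_self _).trans h
    have h3 : 3 ≤ ε * s := by
      have := (div_le_iff₀ hε).mp hs3
      linarith [this]
    linarith
  have h2 : ∀ᶠ t : ℝ in Filter.atTop, (3/2) * iterLog α (l+1) t ≤ ε * iterLog α l t := by
    have := (iterLog_tendsto α htend l).eventually h1
    filter_upwards [this] with t ht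
    show (3/2) * Real.log (Real.exp 1 + iterLog α l t) ≤ ε * iterLog α l t
    exact ht
  obtain ⟨T₀, hT₀⟩ := Filter.eventually_atTop.mp h2
  set T : ℝ := max T₀ 1 with hT
  have hT1 : 1 ≤ T := le_max_right _ _
  have hlogT : 0 ≤ Real.log T := Real.log_nonneg hT1
  have hiterT : 1 ≤ iterLog α (l+1) T := iterLog_ge_one α hmono h0 (l+1) T (by linarith)
  refine ⟨(3/2) * Real.log T * iterLog α (l+1) T + 1, by nlinarith, ?_⟩
  intro t ht
  have hlogt : 0 ≤ Real.log t := Real.log_nonneg ht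
  have hiter_l : 1 ≤ iterLog α l t := iterLog_ge_one α hmono h0 l t (by linarith)
  have hrhs : 0 ≤ ε * Real.log t * iterLog α l t := by positivity
  rcases le_total T t with h | h
  · have hevt := hT₀ t (le_trans (le_max_left _ _) h)
    nlinarith
  · have hm : iterLog α (l+1) t ≤ iterLog α (l+1) T :=
      iterLog_mono α hmono h0 (l+1) t T (by linarith) h
    have hlt : Real.log t ≤ Real.log T := Real.log_le_log (by linarith) h
    have h1t : 1 ≤ iterLog α (l+1) t := iterLog_ge_one α hmono h0 (l+1) t (by linarith)
    have hprod : Real.log t * iterLog α (l+1) t ≤ Real.log T * iterLog α (l+1) T :=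
      mul_le_mul hlt hm (by linarith) hlogT
    nlinarith

set_option maxHeartbeats 1000000 in
/-- Lemma A.2': subexponential decay is controlled by `θ^{(l+1)}`. -/
theorem stmt_9 (d : ℕ) (α : ℝ → ℝ)
    (hmono : MonotoneOn α (Set.Ici 0))
    (hconc : ConcaveOn ℝ (Set.Ici 0) α)
    (h0 : 1 ≤ α 0)
    (htend : Filter.Tendsto α Filter.atTop Filter.atTop)
    (hdiff : ∀ x : ℝ, 0 ≤ x → DifferentiableAt ℝ α x)
    (hder : ∀ x : ℝ, 0 ≤ x → deriv α x ≤ α x / (1 + x)) :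
    ∀ l : ℕ, 1 ≤ l → ∀ ε : ℝ, 0 < ε → ∃ c₅ > (0:ℝ), ∃ c₆ > (0:ℝ),
      ∀ (x : EuclideanSpace ℝ (Fin d)) (lam : ℝ), 0 ≤ lam →
        Real.exp (-ε * Real.log (1 + ‖x‖ ^ 2) * iterLog α l (1 + ‖x‖ ^ 2)) ≤
          theta α (l + 1) x lam *
            Real.exp (c₅ * (lam / Real.sqrt (iterLog α (l + 1) lam)) * (1 + lam) + c₆) := by
  intro l hl ε hε
  obtain ⟨c₆, hc₆pos, hc₆⟩ := key_bound α hmono h0 htend l ε hε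
  refine ⟨3/2, by norm_num, c₆, hc₆pos, ?_⟩
  intro x lam hlam
  rw [theta, ← Real.exp_add, Real.exp_le_exp]
  set t : ℝ := 1 + ‖x‖ ^ 2 with ht_def
  have ht : 1 ≤ t := by
    have : (0:ℝ) ≤ ‖x‖ ^ 2 := by positivity
    linarith
  set s : ℝ := Real.sqrt t with hs_def
  have hs0 : 0 ≤ s := Real.sqrt_nonneg t
  have hst : s ≤ t := by
    rw [hs_def]
    calc Real.sqrt t ≤ Real.sqrt (t ^ 2) := Real.sqrt_le_sqrt (by nlinarith)
      _ = t := Real.sqrt_sq (by linarith)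
  set L : ℝ := Real.log t with hL_def
  have hL : 0 ≤ L := Real.log_nonneg ht
  set A : ℝ := iterLog α (l+1) s with hA_def
  have hA1 : 1 ≤ A := iterLog_ge_one α hmono h0 (l+1) s hs0
  have hAt : A ≤ iterLog α (l+1) t := iterLog_mono α hmono h0 (l+1) s t hs0 hst
  set B : ℝ := iterLog α (l+1) lam with hB_def
  have hB1 : 1 ≤ B := iterLog_ge_one α hmono h0 (l+1) lam hlam
  have hsB : 1 ≤ Real.sqrt B := Real.one_le_sqrt.mpr hB1
  set μ : ℝ := lam / Real.sqrt B with hμ_def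
  have hμ0 : 0 ≤ μ := div_nonneg hlam (by linarith)
  have hμlam : μ ≤ lam := by
    rw [hμ_def, div_le_iff₀ (by linarith)]
    nlinarith
  have hLA : 0 ≤ L * A := mul_nonneg hL (by linarith)
  have hsqrtLA : 0 ≤ Real.sqrt (L * A) := Real.sqrt_nonneg _
  have hsq : Real.sqrt (1 + lam ^ 2 + L * A) ≤ (1 + lam) + Real.sqrt (L * A) := by
    have h2 : 1 + lam ^ 2 + L * A ≤ ((1 + lam) + Real.sqrt (L * A)) ^ 2 := by
      nlinarith [Real.sq_sqrt hLA]
    calc Real.sqrt (1 + lam ^ 2 + L * A)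
        ≤ Real.sqrt (((1 + lam) + Real.sqrt (L * A)) ^ 2) := Real.sqrt_le_sqrt h2
      _ = (1 + lam) + Real.sqrt (L * A) := Real.sqrt_sq (by positivity)
  have hamgm : μ * Real.sqrt (L * A) ≤ (1/2) * μ ^ 2 + (1/2) * (L * A) := by
    nlinarith [sq_nonneg (μ - Real.sqrt (L * A)), Real.sq_sqrt hLA]
  have hμsq : μ ^ 2 ≤ μ * (1 + lam) := by nlinarith
  have h1 : μ * Real.sqrt (1 + lam ^ 2 + L * A) ≤ μ * ((1 + lam) + Real.sqrt (L * A)) :=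
    mul_le_mul_of_nonneg_left hsq hμ0
  have hμS : μ * Real.sqrt (1 + lam ^ 2 + L * A) ≤ (3/2) * (μ * (1 + lam)) + (1/2) * (L * A) := by
    nlinarith
  have hLAle : L * A ≤ L * iterLog α (l+1) t := mul_le_mul_of_nonneg_left hAt hL
  have hkey := hc₆ t ht
  linarith [hμS, hLAle, hkey]
end

section
/- There exists a constant c > 0 such that α_{l+1}(√(1+λ)) ≤ c + α_l(1+λ)^{1/2} for all λ ≥ 0 and all l ≥ 0. -/
private lemma log_le_seven_add_sqrt {t : ℝ} (ht : 0 ≤ t) :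
    Real.log (Real.exp 1 + t) ≤ 7 + Real.sqrt t := by
  have he : (2.7182818283 : ℝ) < Real.exp 1 := Real.exp_one_gt_d9
  have he2 : Real.exp 1 ≤ 2.7182818286 := le_of_lt Real.exp_one_lt_d9
  rcases le_total t 256 with h | h
  · have h1 : Real.exp 1 + t ≤ Real.exp 7 := by
      have : Real.exp 7 = (Real.exp 1) ^ 7 := by
        rw [← Real.exp_nat_mul]; norm_num
      rw [this]
      have h7 : (2.7:ℝ)^7 ≤ (Real.exp 1)^7 :=
        pow_le_pow_left₀ (by norm_num) (by linarith) 7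
      nlinarith
    have hpos : (0:ℝ) < Real.exp 1 + t := by positivity
    have := (Real.log_le_iff_le_exp hpos).mpr h1
    have hs : (0:ℝ) ≤ Real.sqrt t := Real.sqrt_nonneg t
    linarith
  · -- t ≥ 256
    have htpos : (0:ℝ) < t := by linarith
    have h1 : Real.exp 1 + t ≤ 2 * t := by nlinarith
    have h2 : Real.log (Real.exp 1 + t) ≤ Real.log (2 * t) :=
      Real.log_le_log (by positivity) h1
    have h3 : Real.log (2 * t) = Real.log 2 + Real.log t :=
      Real.log_mul (by norm_num) (ne_of_gt htpos)
    have hlog2 : Real.log 2 ≤ 1 := by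
      have := Real.log_le_sub_one_of_pos (show (0:ℝ) < 2 by norm_num)
      linarith
    -- log t ≤ 4 * (t^(1/4) - 1)
    have hst : Real.sqrt t ≥ 16 := by
      have : Real.sqrt 256 ≤ Real.sqrt t := Real.sqrt_le_sqrt h
      have h256 : Real.sqrt 256 = 16 := by
        rw [show (256:ℝ) = 16^2 by norm_num, Real.sqrt_sq (by norm_num)]
      linarith
    have hsst : Real.sqrt (Real.sqrt t) ≥ 4 := by
      have : Real.sqrt 16 ≤ Real.sqrt (Real.sqrt t) := Real.sqrt_le_sqrt (by linarith)
      have h16 : Real.sqrt 16 = 4 := by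
        rw [show (16:ℝ) = 4^2 by norm_num, Real.sqrt_sq (by norm_num)]
      linarith
    have hlt : Real.log t = 2 * Real.log (Real.sqrt t) := by
      rw [Real.log_sqrt ht]; ring
    have hlst : Real.log (Real.sqrt t) = 2 * Real.log (Real.sqrt (Real.sqrt t)) := by
      rw [Real.log_sqrt (Real.sqrt_nonneg t)]; ring
    have hbase : Real.log (Real.sqrt (Real.sqrt t)) ≤ Real.sqrt (Real.sqrt t) - 1 :=
      Real.log_le_sub_one_of_pos (by positivity)
    have hsq : Real.sqrt (Real.sqrt t) * Real.sqrt (Real.sqrt t) = Real.sqrt t :=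
      Real.mul_self_sqrt (Real.sqrt_nonneg t)
    have hlogt : Real.log t ≤ Real.sqrt t - 4 := by
      have h4 : 4 * Real.sqrt (Real.sqrt t) ≤ Real.sqrt t := by nlinarith
      rw [hlt, hlst]
      linarith
    linarith

private lemma iterLog_mono_nonneg (α : ℝ → ℝ)
    (hmono : MonotoneOn α (Set.Ici 0)) (h0 : 1 ≤ α 0) :
    ∀ l : ℕ, (∀ x y : ℝ, 0 ≤ x → x ≤ y → iterLog α l x ≤ iterLog α l y) ∧
      (∀ x : ℝ, 0 ≤ x → 0 ≤ iterLog α l x) := by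
  intro l
  induction l with
  | zero =>
    constructor
    · intro x y hx hxy
      exact hmono hx (le_trans hx hxy) hxy
    · intro x hx
      have := hmono (le_refl (0:ℝ)) hx hx
      simp only [iterLog]
      linarith
  | succ l ih =>
    obtain ⟨ihm, ihn⟩ := ih
    constructor
    · intro x y hx hxy
      simp only [iterLog]
      apply Real.log_le_log
      · have := ihn x hx
        have := Real.exp_pos 1
        linarith
      · linarith [ihm x y hx hxy]
    · intro x hx
      simp only [iterLog]
      apply Real.log_nonneg
      have := ihn x hx
      have : (1:ℝ) ≤ Real.exp 1 := by
        have := Real.exp_one_gt_d9; linarith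
      linarith [ihn x hx]

/-- comparison between consecutive levels of the hierarchy:
`α_{l+1}(√(1+λ)) ≤ c + α_l(1+λ)^{1/2}`. -/
theorem stmt_10 (α : ℝ → ℝ) (C : ℝ)
    (hmono : MonotoneOn α (Set.Ici 0))
    (hconc : ConcaveOn ℝ (Set.Ici 0) α)
    (h0 : 1 ≤ α 0)
    (hgrowth : ∀ x : ℝ, 0 ≤ x → α x ≤ C * (1 + x)) :
    ∃ c > (0:ℝ), ∀ (l : ℕ) (lam : ℝ), 0 ≤ lam →
      iterLog α (l + 1) (Real.sqrt (1 + lam)) ≤ c + Real.sqrt (iterLog α l (1 + lam)) := by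
  refine ⟨7, by norm_num, ?_⟩
  intro l lam hlam
  obtain ⟨hm, hn⟩ := iterLog_mono_nonneg α hmono h0 l
  have hx : (0:ℝ) ≤ 1 + lam := by linarith
  have hs0 : (0:ℝ) ≤ Real.sqrt (1 + lam) := Real.sqrt_nonneg _
  have hsle : Real.sqrt (1 + lam) ≤ 1 + lam := by
    have h := Real.sqrt_le_sqrt (show (1+lam) ≤ (1+lam)^2 by nlinarith)
    rwa [Real.sqrt_sq hx] at h
  have h1 : iterLog α l (Real.sqrt (1 + lam)) ≤ iterLog α l (1 + lam) :=
    hm _ _ hs0 hsle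
  have h2 : (0:ℝ) ≤ iterLog α l (1 + lam) := hn _ hx
  have h3 : (0:ℝ) ≤ iterLog α l (Real.sqrt (1 + lam)) := hn _ hs0
  show Real.log (Real.exp 1 + iterLog α l (Real.sqrt (1 + lam))) ≤ _
  calc Real.log (Real.exp 1 + iterLog α l (Real.sqrt (1 + lam)))
      ≤ Real.log (Real.exp 1 + iterLog α l (1 + lam)) := by
        apply Real.log_le_log
        · have := Real.exp_pos 1; linarith
        · linarith
    _ ≤ 7 + Real.sqrt (iterLog α l (1 + lam)) := log_le_seven_add_sqrt h2
end
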